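/- arXiv:1805.11608 — 2 statements merged into one kernel-verified Lean document; each statement's English description precedes it below -/
import Mathlib

section
/- Let (X, ≼) be a quasi-ordered set. If every increasing chain of chains in IC(X, ≼) (i.e., every ordinal-indexed family (A_γ)_{γ<δ} of increasing chains with γ < γ' < δ implying A_γ ⊑ A_{γ'} and not A_{γ'} ⊑ A_γ) is indexed by a countable ordinal δ, then for every increasing chain A in IC(X, ≼) there exists a maximal increasing chain B with A ⊑ B. -/
universe u

/-- An increasing chain in a quasi-ordered set `(X, r)`: an ordinal `len` together with a
family of elements of `X` indexed by the ordinals below `len`, such that `β < γ` implies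
`x_β ≺ x_γ` (i.e. `x_β ≼ x_γ` and not `x_γ ≼ x_β`). -/
structure IncChain (X : Type u) (r : X → X → Prop) : Type (u + 1) where
  len : Ordinal.{u}
  val : (β : Ordinal.{u}) → β < len → X
  inc : ∀ (β γ : Ordinal.{u}) (hβ : β < len) (hγ : γ < len), β < γ →
    r (val β hβ) (val γ hγ) ∧ ¬ r (val γ hγ) (val β hβ)

namespace IncChain

variable {X : Type u} {r : X → X → Prop}

/-- The domination quasi-order `⊑` on increasing chains. -/
def Le (A B : IncChain X r) : Prop :=
  ∀ (β : Ordinal.{u}) (hβ : β < A.len), ∃ (γ : Ordinal.{u}) (hγ : γ < B.len),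
    r (A.val β hβ) (B.val γ hγ)

/-- The equivalence `≐` induced by `⊑`. -/
def Equiv (A B : IncChain X r) : Prop := A.Le B ∧ B.Le A

/-- `A ⊆ B`: every element of the chain `A` occurs in the chain `B`. -/
def Subset (A B : IncChain X r) : Prop :=
  ∀ (β : Ordinal.{u}) (hβ : β < A.len), ∃ (γ : Ordinal.{u}) (hγ : γ < B.len),
    B.val γ hγ = A.val β hβ

/-- `A` is cofinal in `B`. -/
def Cofinal (A B : IncChain X r) : Prop := A.Subset B ∧ B.Le A

/-- The cofinality of a chain: the least ordinal indexing a chain cofinal in it. -/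
noncomputable def cof (B : IncChain X r) : Ordinal.{u} :=
  sInf {α : Ordinal.{u} | ∃ A : IncChain X r, A.len = α ∧ A.Cofinal B}

/-- A maximal chain. -/
def Maximal (A : IncChain X r) : Prop := ∀ B : IncChain X r, A.Le B → B.Le A

end IncChain

/-! If no maximal chain lies above `A`, transfinite recursion yields a strictly `⊑`-increasing
family of chains above `A` indexed by all countable ordinals: a chain of chains of length `ω₁`,
which the hypothesis forbids. The recursion never gets stuck because every countable `⊑`-chain
of chains is bounded above. For a chain without a greatest element this is a diagonal argument:
enumerate the countably many elements of all its chains and climb past them one at a time,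
always stepping strictly up so that the result is again an increasing chain (of length `ω`).
Countability of the individual chains comes from the hypothesis applied to chains of one-element
chains. -/

open Cardinal Ordinal

universe v w

theorem Ordinal.countable_Iio_of_lt_omega_one {α : Ordinal.{w}} (hα : α < ω₁) :
    (Set.Iio α).Countable := by
  rw [← Set.countable_coe_iff, ← mk_le_aleph0_iff, Cardinal.mk_Iio_ordinal, lift_le_aleph0,
    ← lt_aleph_one_iff]
  exact lt_omega_iff_card_lt.mp hα

theorem MonotoneOn.isChain_image {α β : Type*} [LinearOrder α] [Preorder β] {f : α → β}
    {s : Set α} (hf : MonotoneOn f s) : IsChain (· ≤ ·) (f '' s) := by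
  rintro _ ⟨x, hx, rfl⟩ _ ⟨y, hy, rfl⟩ -
  exact (le_total x y).imp (hf hx hy) (hf hy hx)

theorem exists_ge_isMax_of_bddAbove_countable_chains {P : Type v} [Preorder P]
    (hbdd : ∀ s : Set P, s.Countable → IsChain (· ≤ ·) s → BddAbove s)
    (hω₁ : ∀ f : Ordinal.{w} → P, ¬ StrictMonoOn f (Set.Iio ω₁)) (a : P) :
    ∃ b, a ≤ b ∧ IsMax b := by
  classical
  by_contra! hnotMax
  let g : Ordinal.{w} → P := Ordinal.lt_wf.fix fun α g =>
    if h : ∃ c, a < c ∧ ∀ β (hβ : β < α), g β hβ < c then h.choose else a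
  have g_eq (α : Ordinal.{w}) : g α =
      if h : ∃ c, a < c ∧ ∀ β < α, g β < c then h.choose else a :=
    WellFounded.fix_eq _ _ α
  have hg : ∀ α < ω₁, a < g α ∧ ∀ β < α, g β < g α := by
    intro α
    induction α using WellFoundedLT.induction with | _ α ih => ?_
    intro hα
    have ha (β : Ordinal.{w}) (hβ : β < α) : a < g β := (ih β hβ (hβ.trans hα)).1
    have hmono : StrictMonoOn g (Set.Iio α) := fun β _ γ hγ hβγ => (ih γ hγ (hγ.trans hα)).2 β hβγ
    have hchain : IsChain (· ≤ ·) (insert a (g '' Set.Iio α)) :=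
      hmono.monotoneOn.isChain_image.insert fun _ ⟨β, hβ, hgβ⟩ _ => Or.inl (hgβ ▸ (ha β hβ).le)
    obtain ⟨b, hb⟩ := hbdd _ (((countable_Iio_of_lt_omega_one hα).image g).insert a) hchain
    obtain ⟨c, hbc⟩ := not_isMax_iff.mp (hnotMax b (hb (Set.mem_insert a _)))
    have hex : ∃ c, a < c ∧ ∀ β < α, g β < c :=
      ⟨c, (hb (Set.mem_insert a _)).trans_lt hbc, fun β hβ =>
        (hb (Set.mem_insert_of_mem a (Set.mem_image_of_mem g hβ))).trans_lt hbc⟩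
    rw [g_eq α, dif_pos hex]
    exact hex.choose_spec
  exact hω₁ g fun β _ γ hγ hβγ => (hg γ hγ).2 β hβγ

namespace IncChain

section Preorder

variable {X : Type u} [Preorder X]

instance : Preorder (IncChain X (· ≤ ·)) where
  le := Le
  le_refl _ β hβ := ⟨β, hβ, le_rfl⟩
  le_trans _ _ _ hAB hBC β hβ :=
    let ⟨γ, hγ, h₁⟩ := hAB β hβ
    let ⟨δ, hδ, h₂⟩ := hBC γ hγ
    ⟨δ, hδ, h₁.trans h₂⟩

theorem val_lt_val (A : IncChain X (· ≤ ·)) {β γ : Ordinal.{u}} (hβ : β < A.len)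
    (hγ : γ < A.len) (h : β < γ) : A.val β hβ < A.val γ hγ :=
  lt_iff_le_not_ge.mpr (A.inc β γ hβ hγ h)

theorem val_le_val (A : IncChain X (· ≤ ·)) {β γ : Ordinal.{u}} (hβ : β < A.len)
    (hγ : γ < A.len) (h : β ≤ γ) : A.val β hβ ≤ A.val γ hγ := by
  obtain rfl | h := h.eq_or_lt
  · exact le_rfl
  · exact (A.val_lt_val hβ hγ h).le

theorem exists_val_gt_ge {A B C : IncChain X (· ≤ ·)} (hAC : A < C) (hBC : B ≤ C)
    {β γ : Ordinal.{u}} (hβ : β < A.len) (hγ : γ < B.len) :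
    ∃ (δ : Ordinal.{u}) (hδ : δ < C.len), A.val β hβ < C.val δ hδ ∧ B.val γ hγ ≤ C.val δ hδ := by
  obtain ⟨hAC, hCA⟩ := lt_iff_le_not_ge.mp hAC
  obtain ⟨δ₁, hδ₁, h₁⟩ := hAC β hβ
  obtain ⟨δ₂, hδ₂, h₂⟩ := hBC γ hγ
  obtain ⟨δ₃, hδ₃, h₃⟩ : ∃ (δ : Ordinal.{u}) (hδ : δ < C.len),
      ∀ (β : Ordinal.{u}) (hβ : β < A.len), ¬ C.val δ hδ ≤ A.val β hβ := by
    simpa [LE.le, Le] using hCA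
  have hδ : max (max δ₁ δ₂) δ₃ < C.len := max_lt (max_lt hδ₁ hδ₂) hδ₃
  refine ⟨_, hδ, lt_of_le_not_ge ?_ fun h => h₃ β hβ ?_, ?_⟩
  · exact h₁.trans (C.val_le_val _ _ ((le_max_left _ _).trans (le_max_left _ _)))
  · exact (C.val_le_val _ _ (le_max_right _ _)).trans h
  · exact h₂.trans (C.val_le_val _ _ ((le_max_right _ _).trans (le_max_left _ _)))

noncomputable def ofStrictMono (s : ℕ → X) (hs : StrictMono s) : IncChain X (· ≤ ·) where
  len := ω
  val β hβ := s (lt_omega0.mp hβ).choose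
  inc β γ hβ hγ h := by
    have hβγ : (lt_omega0.mp hβ).choose < (lt_omega0.mp hγ).choose := by
      rw [← Nat.cast_lt (α := Ordinal.{u}), ← (lt_omega0.mp hβ).choose_spec,
        ← (lt_omega0.mp hγ).choose_spec]
      exact h
    exact lt_iff_le_not_ge.mp (hs hβγ)

theorem ofStrictMono_val_natCast (s : ℕ → X) (hs : StrictMono s) (n : ℕ) :
    (ofStrictMono s hs).val n (natCast_lt_omega0 n) = s n := by
  have h := (lt_omega0.mp (natCast_lt_omega0.{u} n)).choose_spec
  exact congrArg s (Nat.cast_injective h).symm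

instance : Inhabited (IncChain X (· ≤ ·)) :=
  ⟨⟨0, fun _ h => absurd h not_lt_zero, fun _ _ _ h => absurd h not_lt_zero⟩⟩

def toSet (A : IncChain X (· ≤ ·)) : Set X :=
  Set.range fun β : Set.Iio A.len => A.val β β.2

theorem countable_toSet {A : IncChain X (· ≤ ·)} (hA : A.len.card ≤ ℵ₀) : A.toSet.Countable := by
  have : Countable (Set.Iio A.len) := by
    rw [← mk_le_aleph0_iff, Cardinal.mk_Iio_ordinal, lift_le_aleph0]
    exact hA
  exact Set.countable_range _

theorem val_mem_toSet (A : IncChain X (· ≤ ·)) {β : Ordinal.{u}} (hβ : β < A.len) :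
    A.val β hβ ∈ A.toSet :=
  ⟨⟨β, hβ⟩, rfl⟩

theorem exists_forall_le_val_of_countable {T : Set X} (hT : T.Countable)
    (hdir : ∀ x ∈ T, ∀ y ∈ T, ∃ z ∈ T, x < z ∧ y ≤ z) :
    ∃ B : IncChain X (· ≤ ·), ∀ x ∈ T, ∃ (β : Ordinal.{u}) (hβ : β < B.len), x ≤ B.val β hβ := by
  rcases T.eq_empty_or_nonempty with rfl | hne
  · exact ⟨default, by simp⟩
  obtain ⟨e, rfl⟩ := hT.exists_eq_range hne
  simp only [Set.forall_mem_range, Set.exists_range_iff] at hdir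
  choose next hnext using hdir
  -- step `n + 1` overtakes step `n` and the `n`-th element of the enumeration `e`
  let idx : ℕ → ℕ := fun n => Nat.rec 0 (fun n k => next k n) n
  have hs : StrictMono (e ∘ idx) := strictMono_nat_of_lt_succ fun n => (hnext (idx n) n).1
  refine ⟨ofStrictMono _ hs, Set.forall_mem_range.mpr fun n => ?_⟩
  exact ⟨_, natCast_lt_omega0 (n + 1), (ofStrictMono_val_natCast _ hs _).symm ▸ (hnext (idx n) n).2⟩

theorem bddAbove_of_forall_exists_lt {s : Set (IncChain X (· ≤ ·))} (hs : s.Countable)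
    (hlen : ∀ A ∈ s, A.len.card ≤ ℵ₀) (hdir : ∀ A ∈ s, ∀ B ∈ s, ∃ C ∈ s, A < C ∧ B ≤ C) :
    BddAbove s := by
  have hT : (⋃ A ∈ s, A.toSet).Countable := hs.biUnion fun A hA => countable_toSet (hlen A hA)
  obtain ⟨D, hD⟩ := exists_forall_le_val_of_countable hT <| by
    simp only [Set.mem_iUnion₂]
    rintro _ ⟨A, hA, ⟨β, hβ⟩, rfl⟩ _ ⟨B, hB, ⟨γ, hγ⟩, rfl⟩
    obtain ⟨C, hC, hAC, hBC⟩ := hdir A hA B hB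
    obtain ⟨δ, hδ, h₁, h₂⟩ := exists_val_gt_ge hAC hBC hβ hγ
    exact ⟨_, ⟨C, hC, C.val_mem_toSet hδ⟩, h₁, h₂⟩
  exact ⟨D, fun A hA β hβ => hD _ (Set.mem_biUnion hA (A.val_mem_toSet hβ))⟩

theorem bddAbove_of_countable_isChain {s : Set (IncChain X (· ≤ ·))} (hs : s.Countable)
    (hc : IsChain (· ≤ ·) s) (hlen : ∀ A ∈ s, A.len.card ≤ ℵ₀) : BddAbove s := by
  by_cases hmax : ∃ M ∈ s, ∀ A ∈ s, A ≤ M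
  · obtain ⟨M, -, hM⟩ := hmax
    exact ⟨M, hM⟩
  push Not at hmax
  refine bddAbove_of_forall_exists_lt hs hlen fun A hA B hB => ?_
  obtain ⟨M, hM, hAM, hBM⟩ := hc.directedOn A hA B hB
  obtain ⟨C, hC, hCM⟩ := hmax M hM
  have hMC : M < C := lt_of_le_not_ge ((hc.total hM hC).resolve_right hCM) hCM
  exact ⟨C, hC, hAM.trans_lt hMC, hBM.trans hMC.le⟩

def single (x : X) : IncChain X (· ≤ ·) where
  len := 1
  val _ _ := x
  inc _ _ _ hγ h := absurd (h.trans_le (Order.lt_one_iff.mp hγ).le) not_lt_zero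

theorem strictMono_single : StrictMono (single : X → IncChain X (· ≤ ·)) := fun _ _ hxy =>
  lt_iff_le_not_ge.mpr ⟨fun _ _ => ⟨0, zero_lt_one, hxy.le⟩,
    fun h => let ⟨_, _, hyx⟩ := h 0 zero_lt_one; hxy.not_ge hyx⟩

noncomputable def map {Y : Type max u v} [Preorder Y] (f : X → Y) (hf : StrictMono f)
    (A : IncChain X (· ≤ ·)) : IncChain Y (· ≤ ·) where
  len := lift.{v} A.len
  val β hβ := f (A.val _ (lt_lift_iff.mp hβ).choose_spec.1)
  inc β γ hβ hγ h := by
    obtain ⟨-, hβ'⟩ := (lt_lift_iff.mp hβ).choose_spec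
    obtain ⟨-, hγ'⟩ := (lt_lift_iff.mp hγ).choose_spec
    rw [← hβ', ← hγ', Ordinal.lift_lt] at h
    exact lt_iff_le_not_ge.mp (hf (A.val_lt_val _ _ h))

theorem card_len_le_aleph0
    (hcc : ∀ F : IncChain (IncChain X (· ≤ ·)) (· ≤ ·), F.len.card ≤ ℵ₀)
    (A : IncChain X (· ≤ ·)) : A.len.card ≤ ℵ₀ := by
  have h := hcc (A.map.{u, u + 1} single strictMono_single)
  rwa [map, ← Ordinal.lift_card, lift_le_aleph0] at h

end Preorder

theorem not_strictMonoOn_Iio_omega_one {P : Type v} [Preorder P]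
    (hcc : ∀ F : IncChain P (· ≤ ·), F.len.card ≤ ℵ₀) (f : Ordinal.{v} → P) :
    ¬ StrictMonoOn f (Set.Iio ω₁) := fun hf => by
  have h := hcc ⟨ω₁, fun β _ => f β, fun _ _ hβ hγ h => lt_iff_le_not_ge.mp (hf hβ hγ h)⟩
  rw [card_omega] at h
  exact aleph0_lt_aleph_one.not_ge h

end IncChain

/-- if every increasing chain of chains in `IC(X, ≼)` is indexed by a countable
ordinal, then every increasing chain `A` is `⊑`-below some maximal increasing chain `B`. -/
theorem stmt5 {X : Type u} {r : X → X → Prop}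
    (hrefl : ∀ x, r x x) (htrans : ∀ a b c, r a b → r b c → r a c)
    (hcc : ∀ F : IncChain (IncChain X r) IncChain.Le, F.len.card ≤ Cardinal.aleph0)
    (A : IncChain X r) :
    ∃ B : IncChain X r, B.Maximal ∧ A.Le B := by
  let _ : Preorder X := { le := r, le_refl := hrefl, le_trans := htrans }
  obtain ⟨B, hAB, hB⟩ := exists_ge_isMax_of_bddAbove_countable_chains
    (fun s hs hc => IncChain.bddAbove_of_countable_isChain hs hc
      fun C _ => IncChain.card_len_le_aleph0 hcc C)
    (IncChain.not_strictMonoOn_Iio_omega_one hcc) A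
  exact ⟨B, fun C hC => hB hC, hAB⟩
end

section
/- Let (σ_β)_{β<α} be an ordinal-indexed family of protagonist strategies in an initialized generalised safety/reachability game such that β < γ < α implies σ_β ≺ σ_γ (strict dominance). Then α is a countable ordinal. -/
open scoped Classical

/-- A generalised safety/reachability game: a finite directed graph where every vertex has a
successor, a set `protag` of protagonist vertices (the rest belong to the antagonist), a set
`leaf` of leaves (each equipped with exactly a self-loop), an integer payoff attached to each
leaf, and an initial vertex `v0`. -/
structure GSRGame where
  V : Type
  fin : Finite V
  E : V → V → Prop
  succ_exists : ∀ v : V, ∃ w : V, E v w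
  protag : V → Prop
  leaf : V → Prop
  leaf_loop : ∀ v w : V, leaf v → (E v w ↔ w = v)
  pay : V → ℤ
  v0 : V

namespace GSRGame

variable (g : GSRGame)

/-- A strategy: to each nonempty history it assigns a successor of the last vertex.
(A protagonist strategy is only ever consulted at histories ending in a protagonist vertex,
an antagonist strategy at histories ending in an antagonist vertex.) -/
structure Strat where
  act : List g.V → g.V
  valid : ∀ (h : List g.V) (hne : h ≠ []), g.E (h.getLast hne) (act h)

/-- One step of the play extending history `h`: the protagonist moves according to `σ` at
protagonist vertices, the antagonist according to `τ` elsewhere. -/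
noncomputable def step (σ τ : g.Strat) (h : List g.V) : List g.V :=
  h ++ [if g.protag (h.getLastD g.v0) then σ.act h else τ.act h]

/-- The history obtained after `k` steps of play by `(σ, τ)` extending `h`. -/
noncomputable def playList (σ τ : g.Strat) (h : List g.V) : ℕ → List g.V
  | 0 => h
  | k + 1 => g.step σ τ (playList σ τ h k)

/-- The outcome (infinite path) induced by `(σ, τ)` from the history `h`. -/
noncomputable def play (σ τ : g.Strat) (h : List g.V) (k : ℕ) : g.V :=
  (g.playList σ τ h k).getLastD g.v0

/-- The payoff of an outcome: the payoff of the leaf it reaches, and `0` if it reaches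
no leaf. -/
noncomputable def payoffOf (ρ : ℕ → g.V) : ℤ :=
  if hx : ∃ k : ℕ, g.leaf (ρ k) then g.pay (ρ (Nat.find hx)) else 0

/-- The payoff `p(h, σ, τ)` of the outcome induced by `(σ, τ)` from the history `h`. -/
noncomputable def pval (σ τ : g.Strat) (h : List g.V) : ℤ :=
  g.payoffOf (g.play σ τ h)

/-- `h` is a history (a nonempty path starting at `v0`) compatible with the protagonist
strategy `σ`: every protagonist move along `h` agrees with `σ`. -/
def Compat (σ : g.Strat) (h : List g.V) : Prop :=
  h ≠ [] ∧ h.head? = some g.v0 ∧ List.Chain' g.E h ∧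
    ∀ (p : List g.V) (v : g.V), (p ++ [v]) <+: h → p ≠ [] →
      g.protag (p.getLastD g.v0) → σ.act p = v

/-- The cooperative value `cVal(h, σ)`. -/
noncomputable def cVal (σ : g.Strat) (h : List g.V) : ℤ :=
  sSup {z : ℤ | ∃ τ : g.Strat, z = g.pval σ τ h}

/-- The antagonistic value `aVal(h, σ)`. -/
noncomputable def aVal (σ : g.Strat) (h : List g.V) : ℤ :=
  sInf {z : ℤ | ∃ τ : g.Strat, z = g.pval σ τ h}

/-- The antagonistic value `aVal(h)` of a history. -/
noncomputable def aValH (h : List g.V) : ℤ :=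
  sSup {z : ℤ | ∃ σ : g.Strat, z = g.aVal σ h}

/-- The antagonistic-cooperative value `acVal(h)` of a history. -/
noncomputable def acVal (h : List g.V) : ℤ :=
  sSup {z : ℤ | ∃ σ : g.Strat, g.aValH h ≤ g.aVal σ h ∧ z = g.cVal σ h}

/-- Weak dominance `σ ⪯ σ'` (from the initial vertex `v0`). -/
def Dom (σ σ' : g.Strat) : Prop :=
  ∀ τ : g.Strat, g.pval σ τ [g.v0] ≤ g.pval σ' τ [g.v0]

/-- Dominance `σ ≺ σ'`. -/
def SDom (σ σ' : g.Strat) : Prop :=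
  g.Dom σ σ' ∧ ∃ τ : g.Strat, g.pval σ τ [g.v0] < g.pval σ' τ [g.v0]

/-- Admissibility: `σ` is dominated by no strategy. -/
def Admissible (σ : g.Strat) : Prop := ¬ ∃ σ' : g.Strat, g.SDom σ σ'

/-- `h` is a witness of non-dominance of `σ₁` by `σ₂`. -/
def NonDomWitness (σ₁ σ₂ : g.Strat) (h : List g.V) : Prop :=
  g.Compat σ₁ h ∧ g.Compat σ₂ h ∧ g.protag (h.getLastD g.v0) ∧
    σ₁.act h ≠ σ₂.act h ∧ g.aVal σ₂ h < g.cVal σ₁ h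

/-- `h` is a witness of non-admissibility of `σ`. -/
def NonAdmWitness (σ : g.Strat) (h : List g.V) : Prop :=
  g.Compat σ h ∧
    g.aVal σ h ≤ g.cVal σ h ∧ g.cVal σ h ≤ g.aValH h ∧ g.aValH h ≤ g.acVal h ∧
    (g.aVal σ h < g.cVal σ h ∨ g.cVal σ h < g.aValH h ∨ g.aValH h < g.acVal h)

end GSRGame

/-!
For each `β` with `β + 1 < α`, the strict dominance `σ_β ≺ σ_{β+1}` is witnessed by the history
`h` at which the plays of the two strategies against some `τ` first diverge, the move `x` of
`σ_{β+1}` at `h`, and the payoff `a` of `σ_β` from `h` against `τ`, which is less than that of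
`σ_{β+1}`. Such triples `(h, x, a)` form a countable set, and distinct `β` give distinct triples:
if `β < γ` shared one, then the antagonist strategy that plays like the `τ` of `β` after `h · x`
and like the `τ` of `γ` elsewhere makes `σ_{β+1}` earn more than `σ_γ` from `h`. This contradicts
`σ_{β+1} ⪯ σ_γ`, because dominance passes to histories compatible with both strategies.
-/

namespace GSRGame

variable {g : GSRGame}

section Play

variable (σ τ : g.Strat)

noncomputable def move (h : List g.V) : g.V :=
  if g.protag (h.getLastD g.v0) then σ.act h else τ.act h

lemma step_eq (h : List g.V) : g.step σ τ h = h ++ [g.move σ τ h] := rfl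

lemma move_valid {h : List g.V} (hne : h ≠ []) : g.E (h.getLast hne) (g.move σ τ h) := by
  unfold move
  split
  exacts [σ.valid h hne, τ.valid h hne]

lemma prefix_playList (h : List g.V) (k : ℕ) : h <+: g.playList σ τ h k := by
  induction k with
  | zero => exact List.prefix_refl h
  | succ k ih => exact ih.trans (List.prefix_append _ _)

lemma playList_ne_nil {h : List g.V} (hne : h ≠ []) (k : ℕ) : g.playList σ τ h k ≠ [] :=
  (prefix_playList σ τ h k).ne_nil hne

lemma playList_add (h : List g.V) (j k : ℕ) :
    g.playList σ τ h (j + k) = g.playList σ τ (g.playList σ τ h j) k := by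
  induction k with
  | zero => rfl
  | succ k ih => rw [← Nat.add_assoc, playList, ih, playList]

lemma play_succ (h : List g.V) (k : ℕ) :
    g.play σ τ h (k + 1) = g.move σ τ (g.playList σ τ h k) :=
  List.getLastD_concat

lemma play_succ_of_leaf {h : List g.V} (hne : h ≠ []) {k : ℕ} (hk : g.leaf (g.play σ τ h k)) :
    g.play σ τ h (k + 1) = g.play σ τ h k := by
  have hne' := playList_ne_nil σ τ hne k
  have hlast : (g.playList σ τ h k).getLast hne' = g.play σ τ h k := by
    rw [play, List.getLastD_eq_getLast?, List.getLast?_eq_some_getLast hne', Option.getD_some]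
  have hE := move_valid σ τ hne'
  rw [hlast] at hE
  rw [play_succ]
  exact (g.leaf_loop _ _ hk).mp hE

lemma play_eq_of_leaf {h : List g.V} (hne : h ≠ []) {i j : ℕ} (hij : i ≤ j)
    (hi : g.leaf (g.play σ τ h i)) : g.play σ τ h j = g.play σ τ h i := by
  induction j, hij using Nat.le_induction with
  | base => rfl
  | succ j _ ih => rw [play_succ_of_leaf σ τ hne (ih ▸ hi), ih]

end Play

lemma payoffOf_shift {ρ : ℕ → g.V} (hρ : ∀ i j, i ≤ j → g.leaf (ρ i) → ρ j = ρ i)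
    (d : ℕ) : g.payoffOf (fun k => ρ (d + k)) = g.payoffOf ρ := by
  unfold payoffOf
  by_cases hx : ∃ k, g.leaf (ρ k)
  · have hfind : ∀ {j}, Nat.find hx ≤ j → ρ j = ρ (Nat.find hx) := fun hj =>
      hρ _ _ hj (Nat.find_spec hx)
    have hx' : ∃ k, g.leaf (ρ (d + k)) :=
      ⟨Nat.find hx, by rw [hfind (Nat.le_add_left _ _)]; exact Nat.find_spec hx⟩
    rw [dif_pos hx, dif_pos hx']
    exact congrArg g.pay (hfind (Nat.find_min' hx (Nat.find_spec hx')))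
  · have hx' : ¬ ∃ k, g.leaf (ρ (d + k)) := fun ⟨k, hk⟩ => hx ⟨d + k, hk⟩
    rw [dif_neg hx, dif_neg hx']

section Payoff

variable (σ : g.Strat)

lemma pval_playList (τ : g.Strat) {h : List g.V} (hne : h ≠ []) (d : ℕ) :
    g.pval σ τ (g.playList σ τ h d) = g.pval σ τ h := by
  have hplay : g.play σ τ (g.playList σ τ h d) = fun k => g.play σ τ h (d + k) :=
    funext fun k => by rw [play, play, playList_add]
  rw [pval, pval, hplay]
  exact payoffOf_shift (fun i j hij hi => play_eq_of_leaf σ τ hne hij hi) d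

lemma pval_congr {τ₁ τ₂ : g.Strat} {h : List g.V} (hτ : ∀ q, h <+: q → τ₁.act q = τ₂.act q) :
    g.pval σ τ₁ h = g.pval σ τ₂ h := by
  have hplayList : ∀ k, g.playList σ τ₁ h k = g.playList σ τ₂ h k := by
    intro k
    induction k with
    | zero => rfl
    | succ k ih =>
      rw [playList, playList, step_eq, step_eq, move, move, ← ih,
        hτ _ (prefix_playList σ τ₁ h k)]
  have hplay : g.play σ τ₁ h = g.play σ τ₂ h :=
    funext fun k => by rw [play, play, hplayList]
  rw [pval, pval, hplay]

lemma pval_append_act (τ : g.Strat) {h : List g.V} (hne : h ≠ [])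
    (hp : g.protag (h.getLastD g.v0)) : g.pval σ τ (h ++ [σ.act h]) = g.pval σ τ h := by
  have h1 : g.playList σ τ h 1 = h ++ [σ.act h] := by
    rw [playList, playList, step_eq, move, if_pos hp]
  rw [← h1]
  exact pval_playList σ τ hne 1

end Payoff

lemma compat_playList (σ τ : g.Strat) (d : ℕ) : g.Compat σ (g.playList σ τ [g.v0] d) := by
  refine ⟨playList_ne_nil σ τ (List.cons_ne_nil _ _) d, ?_, ?_, ?_⟩
  · obtain ⟨t, ht⟩ := prefix_playList σ τ [g.v0] d
    rw [← ht]
    rfl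
  · induction d with
    | zero => exact List.isChain_singleton _
    | succ d ih =>
      have hne := playList_ne_nil σ τ (List.cons_ne_nil g.v0 []) d
      rw [playList, step_eq]
      refine ih.append (List.isChain_singleton _) fun x hx y hy => ?_
      rw [List.getLast?_eq_some_getLast hne, Option.mem_some_iff] at hx
      rw [List.head?_cons, Option.mem_some_iff] at hy
      exact hx ▸ hy ▸ move_valid σ τ hne
  · induction d with
    | zero =>
      intro p v hpv hp _
      have := hpv.length_le
      simp only [playList, List.length_append, List.length_singleton] at this
      exact absurd (List.length_eq_zero_iff.mp (by omega)) hp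
    | succ d ih =>
      intro p v hpv hp hprot
      rw [playList, step_eq, List.prefix_concat_iff] at hpv
      rcases hpv with hpv | hpv
      · obtain ⟨rfl, hv⟩ := List.append_inj' hpv rfl
        rw [List.singleton_inj.mp hv, move, if_pos hprot]
      · exact ih p v hpv hp hprot

lemma exists_divergence {σ σ' τ : g.Strat} (hne : g.pval σ τ [g.v0] ≠ g.pval σ' τ [g.v0]) :
    ∃ h, g.Compat σ h ∧ g.Compat σ' h ∧ g.protag (h.getLastD g.v0) ∧
      σ.act h ≠ σ'.act h ∧ g.pval σ τ h = g.pval σ τ [g.v0] ∧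
      g.pval σ' τ h = g.pval σ' τ [g.v0] := by
  have hex : ∃ k, g.playList σ τ [g.v0] k ≠ g.playList σ' τ [g.v0] k := by
    by_contra! hall
    exact hne (congrArg g.payoffOf (funext fun k => by rw [play, play, hall]))
  obtain ⟨d, hd⟩ : ∃ d, Nat.find hex = d + 1 :=
    Nat.exists_eq_succ_of_ne_zero fun h0 => Nat.find_spec hex (by rw [h0]; rfl)
  set h := g.playList σ τ [g.v0] d
  have heq : h = g.playList σ' τ [g.v0] d := not_not.mp (Nat.find_min hex (by omega))
  have hmove : g.move σ τ h ≠ g.move σ' τ h := by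
    intro hm
    have := Nat.find_spec hex
    rw [hd, playList, playList, step_eq, step_eq, ← heq, hm] at this
    exact this rfl
  have hprot : g.protag (h.getLastD g.v0) := by
    by_contra hnp
    simp only [move, if_neg hnp] at hmove
    exact hmove rfl
  simp only [move, if_pos hprot] at hmove
  refine ⟨h, compat_playList σ τ d, heq ▸ compat_playList σ' τ d, hprot, hmove,
    pval_playList σ τ (List.cons_ne_nil _ _) d, ?_⟩
  rw [heq]
  exact pval_playList σ' τ (List.cons_ne_nil _ _) d

section Replay

noncomputable def replay (h : List g.V) (hh : List.IsChain g.E h) (τ : g.Strat) : g.Strat where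
  act q := if hq : q <+: h ∧ q.length < h.length then h[q.length] else τ.act q
  valid q hq := by
    split
    case isTrue hqh =>
      have hpos := List.length_pos_iff.mpr hq
      have hlast : q.getLast hq = h[q.length - 1] := by
        rw [List.getLast_eq_getElem]
        exact hqh.1.getElem _
      have hE := List.isChain_iff_getElem.mp hh (q.length - 1) (by omega)
      simp only [Nat.sub_add_cancel hpos] at hE
      rwa [hlast]
    case isFalse => exact τ.valid q hq

variable {h : List g.V} (hh : List.IsChain g.E h) (τ : g.Strat)

lemma replay_act_of_prefix {q : List g.V} (hq : h <+: q) : (replay h hh τ).act q = τ.act q :=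
  dif_neg fun hq' => absurd hq.length_le (not_le.mpr hq'.2)

lemma playList_replay {σ : g.Strat} (hσ : g.Compat σ h) {k : ℕ} (hk : k < h.length) :
    g.playList σ (replay h hh τ) [g.v0] k = h.take (k + 1) := by
  induction k with
  | zero => rw [List.take_one, hσ.2.1]; rfl
  | succ k ih =>
    have hlen : (h.take (k + 1)).length = k + 1 := List.length_take_of_le (by omega)
    have hpre : h.take (k + 1) ++ [h[k + 1]] <+: h := by
      rw [← List.take_succ_eq_append_getElem hk]
      exact List.take_prefix _ h
    rw [playList, ih (by omega), step_eq, List.take_succ_eq_append_getElem hk, move]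
    split
    case isTrue hprot =>
      rw [hσ.2.2.2 _ _ hpre (List.ne_nil_of_length_pos (by omega)) hprot]
    case isFalse =>
      have hact : (replay h hh τ).act (h.take (k + 1)) = h[k + 1] := by
        simp only [replay, hlen, List.take_prefix, true_and, dif_pos hk]
      rw [hact]

end Replay

lemma dom_refl (σ : g.Strat) : g.Dom σ σ := fun _ => le_rfl

theorem Dom.pval_le_of_compat {σ σ' : g.Strat} (hdom : g.Dom σ σ') {h : List g.V}
    (hσ : g.Compat σ h) (hσ' : g.Compat σ' h) (τ : g.Strat) :
    g.pval σ τ h ≤ g.pval σ' τ h := by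
  have hlen : h.length - 1 < h.length := by
    have := List.length_pos_iff.mpr hσ.1
    omega
  have hreplay : ∀ σ₀, g.Compat σ₀ h →
      g.pval σ₀ (replay h hσ.2.2.1 τ) [g.v0] = g.pval σ₀ τ h := by
    intro σ₀ hσ₀
    rw [← pval_playList σ₀ _ (List.cons_ne_nil _ _) (h.length - 1),
      playList_replay hσ.2.2.1 τ hσ₀ hlen, Nat.sub_add_cancel (by omega), List.take_length]
    exact pval_congr σ₀ fun q hq => replay_act_of_prefix hσ.2.2.1 τ hq
  simpa only [hreplay σ hσ, hreplay σ' hσ'] using hdom (replay h hσ.2.2.1 τ)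

noncomputable def splice (l : List g.V) (τ₁ τ₂ : g.Strat) : g.Strat where
  act q := if l <+: q then τ₁.act q else τ₂.act q
  valid q hq := by
    split
    exacts [τ₁.valid q hq, τ₂.valid q hq]

section Splice

variable {σ : g.Strat} {h : List g.V} (τ₁ τ₂ : g.Strat) {x : g.V}

lemma pval_splice_of_act_eq (hne : h ≠ []) (hp : g.protag (h.getLastD g.v0))
    (hx : σ.act h = x) : g.pval σ (splice (h ++ [x]) τ₁ τ₂) h = g.pval σ τ₁ h := by
  rw [← pval_append_act σ _ hne hp, ← pval_append_act σ τ₁ hne hp, hx]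
  exact pval_congr σ fun q hq => if_pos hq

lemma pval_splice_of_act_ne (hne : h ≠ []) (hp : g.protag (h.getLastD g.v0))
    (hx : σ.act h ≠ x) : g.pval σ (splice (h ++ [x]) τ₁ τ₂) h = g.pval σ τ₂ h := by
  rw [← pval_append_act σ _ hne hp, ← pval_append_act σ τ₂ hne hp]
  refine pval_congr σ fun q hq => if_neg fun hxq => hx ?_
  have := (List.prefix_of_prefix_length_le hq hxq (by simp)).eq_of_length (by simp)
  simpa using this

end Splice

structure ImprovesAt (σ σ' : g.Strat) (h : List g.V) (x : g.V) (a : ℤ) : Prop where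
  compat : g.Compat σ h
  compat' : g.Compat σ' h
  protag_last : g.protag (h.getLastD g.v0)
  act_ne : σ.act h ≠ x
  act_eq' : σ'.act h = x
  exists_pval : ∃ τ, g.pval σ τ h = a ∧ a < g.pval σ' τ h

lemma SDom.exists_improvesAt {σ σ' : g.Strat} (hσ : g.SDom σ σ') :
    ∃ h x a, g.ImprovesAt σ σ' h x a := by
  obtain ⟨-, τ, hlt⟩ := hσ
  obtain ⟨h, hc, hc', hp, hne, hpval, hpval'⟩ := exists_divergence hlt.ne
  exact ⟨h, σ'.act h, g.pval σ τ h, hc, hc', hp, hne, rfl, τ, rfl, by rwa [hpval, hpval']⟩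

theorem ImprovesAt.not_dom {σ₁ σ₂ σ₃ σ₄ : g.Strat} {h : List g.V} {x : g.V} {a : ℤ}
    (h₁₂ : g.ImprovesAt σ₁ σ₂ h x a) (h₃₄ : g.ImprovesAt σ₃ σ₄ h x a) :
    ¬ g.Dom σ₂ σ₃ := by
  intro hdom
  obtain ⟨τ₁, -, hlt⟩ := h₁₂.exists_pval
  obtain ⟨τ₃, heq, -⟩ := h₃₄.exists_pval
  have hne := h₁₂.compat.1
  have hle := hdom.pval_le_of_compat h₁₂.compat' h₃₄.compat (splice (h ++ [x]) τ₁ τ₃)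
  rw [pval_splice_of_act_eq τ₁ τ₃ hne h₁₂.protag_last h₁₂.act_eq',
    pval_splice_of_act_ne τ₁ τ₃ hne h₁₂.protag_last h₃₄.act_ne, heq] at hle
  exact hle.not_gt hlt

theorem countable_of_sdom_chain {ι : Type*} [LinearOrder ι] [SuccOrder ι] {σ : ι → g.Strat}
    (hσ : ∀ ⦃i j⦄, i < j → g.SDom (σ i) (σ j)) : Countable ι := by
  have := g.fin
  have hw : ∀ i, ¬ IsMax i →
      ∃ w : List g.V × g.V × ℤ, g.ImprovesAt (σ i) (σ (Order.succ i)) w.1 w.2.1 w.2.2 :=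
    fun i hi =>
      let ⟨h, x, a, hw⟩ := (hσ (Order.lt_succ_of_not_isMax hi)).exists_improvesAt
      ⟨(h, x, a), hw⟩
  choose w hw using hw
  let F : ι → Option (List g.V × g.V × ℤ) := fun i =>
    if hi : IsMax i then none else some (w i hi)
  refine Function.Injective.countable (f := F)
    (Function.Injective.of_lt_imp_ne fun i j hij hF => ?_)
  have hi : ¬ IsMax i := not_isMax_of_lt hij
  have hj : ¬ IsMax j := fun hj => by simp [F, hi, hj] at hF
  have hdom : g.Dom (σ (Order.succ i)) (σ j) := by
    rcases (Order.succ_le_of_lt hij).eq_or_lt with heq | hlt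
    · exact heq ▸ dom_refl _
    · exact (hσ hlt).1
  simp only [F, dif_neg hi, dif_neg hj, Option.some.injEq] at hF
  exact (hw i hi).not_dom (hF ▸ hw j hj) hdom

end GSRGame

/-- any ordinal-indexed family of strategies `(σ_β)_{β<α}` with `β < γ`
implying `σ_β ≺ σ_γ` is indexed by a countable ordinal `α`. -/
theorem stmt13 (g : GSRGame) (α : Ordinal.{0})
    (f : (β : Ordinal.{0}) → β < α → g.Strat)
    (hfam : ∀ (β γ : Ordinal.{0}) (hβ : β < α) (hγ : γ < α), β < γ →
      g.SDom (f β hβ) (f γ hγ)) :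
    α.card ≤ Cardinal.aleph0 := by
  have : Countable α.ToType :=
    g.countable_of_sdom_chain
      (σ := fun i => f (Ordinal.ToType.mk.symm i) (Ordinal.ToType.mk.symm i).2)
      fun i j hij => hfam _ _ _ _ (Ordinal.ToType.mk.symm.lt_iff_lt.mpr hij)
  rw [← Cardinal.mk_toType]
  exact Cardinal.mk_le_aleph0
end
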